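/- Let D ≥ 1 and let A : ℝ → ℝ be convex and continuous on [0, ∞). Define A*(s) = sup over ρ ≥ 0 of (ρ s − A(ρ)), valued in ℝ ∪ {+∞}. Then for every β₀ ≥ 0 and β₁ ∈ ℝ^D, the duality relation L(β₀, β₁) + A(β₀) = sup over (a, b) ∈ ℝ × ℝ^D of (β₀·a + ⟨β₁, b⟩ − A*(a + ‖b‖²/2)) holds as an equality in ℝ ∪ {+∞} (terms with A* = +∞ contribute −∞ to the supremum). -/

import Mathlib

open Classical

/-- The kinetic energy density `L(β₀, β₁) = ‖β₁‖²/(2β₀)` for `β₀ > 0`,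
`L(0,0) = 0`, and `+∞` otherwise, valued in `ℝ ∪ {+∞}`. -/
noncomputable def kineticL (D : ℕ) (β₀ : ℝ) (β₁ : EuclideanSpace ℝ (Fin D)) : EReal :=
  if 0 < β₀ then ((‖β₁‖ ^ 2 / (2 * β₀) : ℝ) : EReal)
  else if β₀ = 0 ∧ β₁ = 0 then (0 : EReal)
  else ⊤

/-- The convex conjugate of `A` over the nonnegative half-line:
`A*(s) = sup_{ρ ≥ 0} (ρ s − A(ρ))`, valued in `ℝ ∪ {+∞}`. -/
noncomputable def posConj (A : ℝ → ℝ) (s : ℝ) : EReal :=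
  ⨆ (ρ : ℝ) (_ : 0 ≤ ρ), ((ρ * s - A ρ : ℝ) : EReal)


lemma ereal_coe_le_of_forall (x : ℝ) (y : EReal)
    (h : ∀ ε : ℝ, 0 < ε → ((x - ε : ℝ) : EReal) ≤ y) : (x : EReal) ≤ y := by
  by_contra hc
  push_neg at hc
  induction y using EReal.rec with
  | bot => exact EReal.coe_ne_bot _ (le_bot_iff.mp (h 1 one_pos))
  | coe r =>
      have hrx : r < x := by exact_mod_cast hc
      have := h ((x - r)/2) (by linarith)
      rw [EReal.coe_le_coe_iff] at this
      linarith
  | top => exact absurd hc (by simp)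

lemma ereal_top_le_of_forall (y : EReal) (h : ∀ M : ℝ, (M : EReal) ≤ y) :
    (⊤ : EReal) ≤ y := by
  by_contra hc
  push_neg at hc
  induction y using EReal.rec with
  | bot => exact absurd (h 0) (by simp)
  | coe r =>
      have := h (r + 1)
      rw [EReal.coe_le_coe_iff] at this
      linarith
  | top => exact absurd hc (lt_irrefl _)

lemma key_sub (A : ℝ → ℝ) (hconv : ConvexOn ℝ (Set.Ici (0:ℝ)) A)
    (hcont : ContinuousOn A (Set.Ici (0:ℝ))) (β₀ : ℝ) (hβ₀ : 0 ≤ β₀)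
    (ε : ℝ) (hε : 0 < ε) :
    ∃ s : ℝ, ∀ ρ : ℝ, 0 ≤ ρ → ρ * s - A ρ ≤ β₀ * s - A β₀ + ε := by
  rcases hβ₀.lt_or_eq with hpos | h0
  · -- β₀ > 0
    have hβm : (β₀/2 : ℝ) ∈ Set.Ici (0:ℝ) := Set.mem_Ici.mpr (by linarith)
    have hβ : β₀ ∈ Set.Ici (0:ℝ) := Set.mem_Ici.mpr (le_of_lt hpos)
    set m : ℝ := (A (β₀/2) - A β₀) / (β₀/2 - β₀) with hm
    set s₁ : ℝ := (A (β₀+1) - A β₀) / ((β₀+1) - β₀) with hs₁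
    have hms₁ : m ≤ s₁ :=
      hconv.secant_mono hβ hβm (Set.mem_Ici.mpr (by linarith))
        (by intro hh; linarith) (by intro hh; linarith) (by linarith)
    have hden : (0:ℝ) < s₁ - m + 1 := by linarith
    set δ : ℝ := min 1 (ε/(s₁ - m + 1)) with hδdef
    have hδpos : 0 < δ := lt_min one_pos (div_pos hε hden)
    have hδ1 : δ ≤ 1 := min_le_left _ _
    have hδ2 : δ * (s₁ - m + 1) ≤ ε := by
      have h := min_le_right 1 (ε/(s₁ - m + 1))
      calc δ * (s₁ - m + 1) ≤ (ε/(s₁ - m + 1)) * (s₁ - m + 1) :=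
            mul_le_mul_of_nonneg_right h (le_of_lt hden)
        _ = ε := by field_simp
    set s : ℝ := (A (β₀+δ) - A β₀) / ((β₀+δ) - β₀) with hs
    have hβδ : (β₀+δ : ℝ) ∈ Set.Ici (0:ℝ) := Set.mem_Ici.mpr (by linarith)
    have hms : m ≤ s :=
      hconv.secant_mono hβ hβm hβδ (by intro hh; linarith)
        (by intro hh; linarith) (by linarith)
    have hss₁ : s ≤ s₁ :=
      hconv.secant_mono hβ hβδ (Set.mem_Ici.mpr (by linarith))
        (by intro hh; linarith) (by intro hh; linarith) (by linarith)
    refine ⟨s, fun ρ hρ => ?_⟩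
    have hρ' : ρ ∈ Set.Ici (0:ℝ) := Set.mem_Ici.mpr hρ
    rcases lt_trichotomy ρ β₀ with h | h | h
    · have hsl : (A ρ - A β₀) / (ρ - β₀) ≤ s :=
        hconv.secant_mono hβ hρ' hβδ (by intro hh; linarith)
          (by intro hh; linarith) (by linarith)
      have hneg : ρ - β₀ < 0 := by linarith
      have := (div_le_iff_of_neg hneg).mp hsl
      linarith
    · subst h; linarith
    · rcases le_or_gt (β₀ + δ) ρ with hge | hlt
      · have hsl : s ≤ (A ρ - A β₀) / (ρ - β₀) :=
          hconv.secant_mono hβ hβδ hρ' (by intro hh; linarith)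
            (by intro hh; linarith) (by linarith)
        have hposd : (0:ℝ) < ρ - β₀ := by linarith
        have := (le_div_iff₀ hposd).mp hsl
        linarith
      · have hsl : m ≤ (A ρ - A β₀) / (ρ - β₀) :=
          hconv.secant_mono hβ hβm hρ' (by intro hh; linarith)
            (by intro hh; linarith) (by linarith)
        have hposd : (0:ℝ) < ρ - β₀ := by linarith
        have hM := (le_div_iff₀ hposd).mp hsl
        nlinarith [mul_le_mul_of_nonneg_right (sub_le_sub_right hss₁ m) (le_of_lt hposd),
          mul_le_mul_of_nonneg_left (show ρ - β₀ ≤ δ by linarith)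
            (show (0:ℝ) ≤ s₁ - m by linarith)]
  · -- β₀ = 0
    subst h0
    obtain ⟨δ, hδpos, hδ⟩ := Metric.continuousWithinAt_iff.mp (hcont 0 Set.self_mem_Ici) ε hε
    have hδ2 : (0:ℝ) < δ/2 := by linarith
    have hmem : (δ/2 : ℝ) ∈ Set.Ici (0:ℝ) := Set.mem_Ici.mpr (le_of_lt hδ2)
    set c : ℝ := (A (δ/2) - A 0) / (δ/2 - 0) with hc
    refine ⟨min c 0, fun ρ hρ => ?_⟩
    have hρ' : ρ ∈ Set.Ici (0:ℝ) := Set.mem_Ici.mpr hρ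
    have hsle : min c 0 ≤ 0 := min_le_right _ _
    rcases le_or_gt ρ (δ/2) with hle | hgt
    · have hd : dist ρ 0 < δ := by
        rw [Real.dist_eq, sub_zero, abs_of_nonneg hρ]; linarith
      have hAρ := hδ hρ' hd
      rw [Real.dist_eq] at hAρ
      have hab := abs_lt.mp hAρ
      have h1 : ρ * min c 0 ≤ 0 := mul_nonpos_of_nonneg_of_nonpos hρ hsle
      linarith [hab.1]
    · have hsl : c ≤ (A ρ - A 0) / (ρ - 0) :=
        hconv.secant_mono Set.self_mem_Ici hmem hρ' (ne_of_gt hδ2)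
          (by intro hh; linarith) (by linarith)
      have hρpos : (0:ℝ) < ρ := lt_trans hδ2 hgt
      have h3 := (le_div_iff₀ (by linarith : (0:ℝ) < ρ - 0)).mp hsl
      have h2 : ρ * min c 0 ≤ ρ * c := mul_le_mul_of_nonneg_left (min_le_left _ _) hρ
      linarith


lemma posConj_lower (A : ℝ → ℝ) (s ρ : ℝ) (hρ : 0 ≤ ρ) :
    ((ρ * s - A ρ : ℝ) : EReal) ≤ posConj A s :=
  le_iSup₂ (f := fun (ρ : ℝ) (_ : 0 ≤ ρ) => ((ρ * s - A ρ : ℝ) : EReal)) ρ hρ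

lemma posConj_upper (A : ℝ → ℝ) (s u : ℝ)
    (h : ∀ ρ : ℝ, 0 ≤ ρ → ρ * s - A ρ ≤ u) : posConj A s ≤ (u : EReal) :=
  iSup₂_le fun ρ hρ => EReal.coe_le_coe_iff.mpr (h ρ hρ)

lemma sup_ge (D : ℕ) (A : ℝ → ℝ) (β₀ : ℝ) (β₁ : EuclideanSpace ℝ (Fin D))
    (s u : ℝ) (hu : posConj A s ≤ (u : EReal)) (b : EuclideanSpace ℝ (Fin D)) :
    ((β₀ * (s - ‖b‖ ^ 2 / 2) + (inner ℝ β₁ b : ℝ) - u : ℝ) : EReal)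
      ≤ ⨆ (a : ℝ) (b : EuclideanSpace ℝ (Fin D)),
          (((β₀ * a + (inner ℝ β₁ b : ℝ) : ℝ) : EReal) - posConj A (a + ‖b‖ ^ 2 / 2)) := by
  have harg : (s - ‖b‖ ^ 2 / 2) + ‖b‖ ^ 2 / 2 = s := by ring
  have h1 : ((β₀ * (s - ‖b‖ ^ 2 / 2) + (inner ℝ β₁ b : ℝ) - u : ℝ) : EReal)
      ≤ ((β₀ * (s - ‖b‖ ^ 2 / 2) + (inner ℝ β₁ b : ℝ) : ℝ) : EReal)
        - posConj A ((s - ‖b‖ ^ 2 / 2) + ‖b‖ ^ 2 / 2) := by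
    rw [harg, EReal.coe_sub]
    exact EReal.sub_le_sub le_rfl hu
  exact h1.trans (le_iSup₂ (f := fun (a : ℝ) (b : EuclideanSpace ℝ (Fin D)) =>
    (((β₀ * a + (inner ℝ β₁ b : ℝ) : ℝ) : EReal) - posConj A (a + ‖b‖ ^ 2 / 2)))
    (s - ‖b‖ ^ 2 / 2) b)

theorem stmt_2 (D : ℕ) (hD : 1 ≤ D) (A : ℝ → ℝ)
    (hconv : ConvexOn ℝ (Set.Ici (0 : ℝ)) A)
    (hcont : ContinuousOn A (Set.Ici (0 : ℝ)))
    (β₀ : ℝ) (hβ₀ : 0 ≤ β₀) (β₁ : EuclideanSpace ℝ (Fin D)) :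
    kineticL D β₀ β₁ + ((A β₀ : ℝ) : EReal)
      = ⨆ (a : ℝ) (b : EuclideanSpace ℝ (Fin D)),
          (((β₀ * a + (inner ℝ β₁ b : ℝ) : ℝ) : EReal) - posConj A (a + ‖b‖ ^ 2 / 2)) := by
  apply le_antisymm
  · -- LHS ≤ RHS
    by_cases hpos : 0 < β₀
    · rw [kineticL, if_pos hpos, ← EReal.coe_add]
      apply ereal_coe_le_of_forall
      intro ε hε
      obtain ⟨s, hs⟩ := key_sub A hconv hcont β₀ hβ₀ ε hε
      have hu : posConj A s ≤ ((β₀ * s - A β₀ + ε : ℝ) : EReal) :=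
        posConj_upper A s _ (fun ρ hρ => by linarith [hs ρ hρ])
      have hkey := sup_ge D A β₀ β₁ s (β₀ * s - A β₀ + ε) hu (β₀⁻¹ • β₁)
      have hib : (inner ℝ β₁ (β₀⁻¹ • β₁) : ℝ) = β₀⁻¹ * ‖β₁‖ ^ 2 := by
        rw [real_inner_smul_right, real_inner_self_eq_norm_sq]
      have hnb : ‖β₀⁻¹ • β₁‖ ^ 2 = β₀⁻¹ ^ 2 * ‖β₁‖ ^ 2 := by
        rw [norm_smul, Real.norm_eq_abs, abs_of_nonneg (inv_nonneg.mpr hβ₀)]; ring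
      have hval : β₀ * (s - ‖β₀⁻¹ • β₁‖ ^ 2 / 2) + (inner ℝ β₁ (β₀⁻¹ • β₁) : ℝ)
          - (β₀ * s - A β₀ + ε) = ‖β₁‖ ^ 2 / (2 * β₀) + A β₀ - ε := by
        rw [hib, hnb]; field_simp; ring
      rw [hval] at hkey
      exact hkey
    · have h0 : β₀ = 0 := le_antisymm (not_lt.mp hpos) hβ₀
      subst h0
      by_cases hb1 : β₁ = 0
      · subst hb1
        rw [kineticL, if_neg (lt_irrefl 0), if_pos ⟨rfl, rfl⟩, zero_add]
        apply ereal_coe_le_of_forall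
        intro ε hε
        obtain ⟨s, hs⟩ := key_sub A hconv hcont 0 le_rfl ε hε
        have hu : posConj A s ≤ ((0 * s - A 0 + ε : ℝ) : EReal) :=
          posConj_upper A s _ (fun ρ hρ => by linarith [hs ρ hρ])
        have hkey := sup_ge D A 0 (0 : EuclideanSpace ℝ (Fin D)) s (0 * s - A 0 + ε) hu 0
        have hval : (0:ℝ) * (s - ‖(0 : EuclideanSpace ℝ (Fin D))‖ ^ 2 / 2)
            + (inner ℝ (0 : EuclideanSpace ℝ (Fin D)) (0 : EuclideanSpace ℝ (Fin D)) : ℝ)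
            - (0 * s - A 0 + ε) = A 0 - ε := by
          simp; ring
        rw [hval] at hkey
        exact hkey
      · rw [kineticL, if_neg (lt_irrefl 0), if_neg (by simp [hb1]), EReal.top_add_coe]
        apply ereal_top_le_of_forall
        intro M
        obtain ⟨s₀, hs₀⟩ := key_sub A hconv hcont 1 zero_le_one 1 one_pos
        set r : ℝ := 1 * s₀ - A 1 + 1 with hr
        have hu : posConj A s₀ ≤ (r : EReal) := posConj_upper A s₀ r hs₀
        have hβn : (0:ℝ) < ‖β₁‖ ^ 2 := pow_pos (norm_pos_iff.mpr hb1) 2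
        set t : ℝ := (M + r) / ‖β₁‖ ^ 2 with ht
        have hkey := sup_ge D A 0 β₁ s₀ r hu (t • β₁)
        have hib : (inner ℝ β₁ (t • β₁) : ℝ) = t * ‖β₁‖ ^ 2 := by
          rw [real_inner_smul_right, real_inner_self_eq_norm_sq]
        have hval : (0:ℝ) * (s₀ - ‖t • β₁‖ ^ 2 / 2) + (inner ℝ β₁ (t • β₁) : ℝ) - r = M := by
          rw [hib, ht]; field_simp; ring
        rw [hval] at hkey
        exact hkey
  · -- RHS ≤ LHS
    apply iSup₂_le
    intro a b
    have h1 := posConj_lower A (a + ‖b‖ ^ 2 / 2) β₀ hβ₀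
    have h2 : ((β₀ * a + (inner ℝ β₁ b : ℝ) : ℝ) : EReal) - posConj A (a + ‖b‖ ^ 2 / 2)
        ≤ ((β₀ * a + (inner ℝ β₁ b : ℝ) - (β₀ * (a + ‖b‖ ^ 2 / 2) - A β₀) : ℝ) : EReal) := by
      rw [EReal.coe_sub]
      exact EReal.sub_le_sub le_rfl h1
    refine h2.trans ?_
    by_cases hpos : 0 < β₀
    · rw [kineticL, if_pos hpos, ← EReal.coe_add, EReal.coe_le_coe_iff]
      have hinner : (inner ℝ β₁ b : ℝ) ≤ ‖β₁‖ * ‖b‖ := real_inner_le_norm β₁ b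
      have hkey : (inner ℝ β₁ b : ℝ) - β₀ * ‖b‖ ^ 2 / 2 ≤ ‖β₁‖ ^ 2 / (2 * β₀) := by
        rw [le_div_iff₀ (by linarith : (0:ℝ) < 2 * β₀)]
        nlinarith [sq_nonneg (‖β₁‖ - β₀ * ‖b‖),
          mul_le_mul_of_nonneg_left hinner (by linarith : (0:ℝ) ≤ 2 * β₀)]
      linarith
    · have h0 : β₀ = 0 := le_antisymm (not_lt.mp hpos) hβ₀
      subst h0
      by_cases hb1 : β₁ = 0
      · subst hb1
        rw [kineticL, if_neg (lt_irrefl 0), if_pos ⟨rfl, rfl⟩, zero_add, EReal.coe_le_coe_iff]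
        simp
      · rw [kineticL, if_neg (lt_irrefl 0), if_neg (by simp [hb1]), EReal.top_add_coe]
        exact le_top
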